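/- Fix U ∈ ℝ. For every ε > 0 there exists R > 0 such that for every k ∈ ℂ with Re k ≥ 1/4, Im k ≤ 0 and |k| ≥ R, with ω_±(k) = (U ± k²·√(1 + 1/k − U²/k³))/(1 + 1/k) defined using the principal branch of the complex square root (the radicand then being off (−∞,0]), one has for every t > 0: |exp(−i ω_+(k) t)| ≤ exp((ε + (1/2)·(Im k)·(4·Re k − 1))·t) and |exp(−i ω_−(k) t)| ≤ exp((ε − (1/2)·(Im k)·(4·Re k − 1))·t). -/

import Mathlib

/-!
Write `s = plateRad U k` and `r = s ^ (1/2)`. Since `r² = s` and `k³ s = k³ + k² − U²`,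
`(1 + 1/k) (ω₊ − (k² − k/2)) = U + 1/2 − U²/(2k) − (k (r − 1))² / 2`,
and `k (r − 1) = k (s − 1) / (r + 1) → 1/2` as `|k| → ∞`, so `ω₊ − (k² − k/2) → U + 3/8`.
As `ω₊ + ω₋ = 2U / (1 + 1/k)`, also `ω₋ + (k² − k/2) → U − 3/8`. Both limits are real, so the
imaginary parts of these corrections are eventually below `ε`, and `‖exp (−i ω t)‖ = exp (t Im ω)`.
The radicand tends to `1`, hence eventually lies in the slit plane.
-/

/-- The radicand `s(k) = 1 + 1/k − U²/k³`. -/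
noncomputable def plateRad (U : ℝ) (k : ℂ) : ℂ := 1 + 1 / k - (U : ℂ) ^ 2 / k ^ 3

/-- The dispersion root `ω₊(k) = (U + k²√(s(k)))/(1+1/k)` (principal branch). -/
noncomputable def plateOmegaPC (U : ℝ) (k : ℂ) : ℂ :=
  ((U : ℂ) + k ^ 2 * plateRad U k ^ ((1 : ℂ) / 2)) / (1 + 1 / k)

/-- The dispersion root `ω₋(k) = (U − k²√(s(k)))/(1+1/k)` (principal branch). -/
noncomputable def plateOmegaMC (U : ℝ) (k : ℂ) : ℂ :=
  ((U : ℂ) - k ^ 2 * plateRad U k ^ ((1 : ℂ) / 2)) / (1 + 1 / k)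

open Filter Bornology Complex
open scoped Topology

lemma cpow_one_half_sq (z : ℂ) : (z ^ (1 / 2 : ℂ)) ^ 2 = z := by
  simp [one_div, cpow_ofNat_inv_pow]

lemma Filter.Tendsto.mul_cpow_half_sub_one {α : Type*} {l : Filter α} {c s : α → ℂ} {a : ℂ}
    (hs : Tendsto s l (𝓝 1)) (hcs : Tendsto (fun x => c x * (s x - 1)) l (𝓝 a)) :
    Tendsto (fun x => c x * (s x ^ (1 / 2 : ℂ) - 1)) l (𝓝 (a / 2)) := by
  have hr : Tendsto (fun x => s x ^ (1 / 2 : ℂ) + 1) l (𝓝 2) := by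
    have := ((continuousAt_cpow_const (b := 1 / 2) one_mem_slitPlane).tendsto.comp hs).add_const 1
    simpa [one_add_one_eq_two] using this
  refine (hcs.div hr two_ne_zero).congr' ?_
  filter_upwards [hr.eventually_ne two_ne_zero] with x hx
  rw [Pi.div_apply, div_eq_iff hx]
  linear_combination (-c x) * cpow_one_half_sq (s x)

lemma Filter.Tendsto.eventually_im_le {α : Type*} {l : Filter α} {f : α → ℂ} {x : ℂ}
    (hf : Tendsto f l (𝓝 x)) (hx : x.im = 0) {ε : ℝ} (hε : 0 < ε) : ∀ᶠ a in l, (f a).im ≤ ε := by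
  have h : Tendsto (fun a => (f a).im) l (𝓝 0) := hx ▸ (continuous_im.tendsto x).comp hf
  exact (h.eventually_lt_const hε).mono fun _ => le_of_lt

lemma exists_pos_forall_le_norm_of_eventually_cobounded {E : Type*} [SeminormedAddCommGroup E]
    {p : E → Prop} (h : ∀ᶠ x in cobounded E, p x) : ∃ R, 0 < R ∧ ∀ x, R ≤ ‖x‖ → p x := by
  obtain ⟨R, -, hR⟩ := hasBasis_cobounded_norm.eventually_iff.1 h
  exact ⟨max R 1, by positivity, fun x hx => hR (le_of_max_le_left hx)⟩

lemma norm_exp_neg_I_mul_mul_ofReal_le {ω : ℂ} {b t : ℝ} (hω : ω.im ≤ b) (ht : 0 ≤ t) :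
    ‖exp (-I * ω * t)‖ ≤ Real.exp (b * t) := by
  simpa [norm_exp] using mul_le_mul_of_nonneg_right hω ht

lemma im_sq_sub_div_two (k : ℂ) : (k ^ 2 - k / 2).im = 1 / 2 * k.im * (4 * k.re - 1) := by
  simp [sq]; ring

lemma tendsto_one_add_one_div_cobounded :
    Tendsto (fun k : ℂ => 1 + 1 / k) (cobounded ℂ) (𝓝 1) := by
  simpa using (tendsto_const_nhds (x := (1 : ℂ))).add tendsto_inv₀_cobounded

section

variable (U : ℝ)

lemma tendsto_plateRad : Tendsto (plateRad U) (cobounded ℂ) (𝓝 1) := by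
  have h := (tendsto_const_nhds (x := (1 : ℂ))).add tendsto_inv₀_cobounded |>.sub
    ((tendsto_const_nhds (x := ((U : ℂ) ^ 2))).mul (tendsto_inv₀_cobounded.pow 3))
  rw [add_zero, zero_pow three_ne_zero, mul_zero, sub_zero] at h
  exact h.congr fun k => by simp [plateRad, div_eq_mul_inv]

lemma pow_three_mul_plateRad {k : ℂ} (hk : k ≠ 0) :
    k ^ 3 * plateRad U k = k ^ 3 + k ^ 2 - (U : ℂ) ^ 2 := by
  rw [plateRad]; field_simp

lemma tendsto_mul_plateRad_sub_one :
    Tendsto (fun k => k * (plateRad U k - 1)) (cobounded ℂ) (𝓝 1) := by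
  have h := (tendsto_const_nhds (x := (1 : ℂ))).sub
    ((tendsto_const_nhds (x := ((U : ℂ) ^ 2))).mul (tendsto_inv₀_cobounded.pow 2))
  rw [zero_pow two_ne_zero, mul_zero, sub_zero] at h
  refine h.congr' ?_
  filter_upwards [eventually_ne_cobounded 0] with k hk
  field_simp
  linear_combination -(pow_three_mul_plateRad U hk)

lemma plateOmegaPC_sub_eq {k : ℂ} (hk : k ≠ 0) (hq : 1 + 1 / k ≠ 0) :
    plateOmegaPC U k - (k ^ 2 - k / 2) = ((U : ℂ) + 1 / 2 - (U : ℂ) ^ 2 / 2 * k⁻¹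
      - (k * (plateRad U k ^ (1 / 2 : ℂ) - 1)) ^ 2 / 2) / (1 + 1 / k) := by
  rw [eq_div_iff hq, plateOmegaPC, sub_mul, div_mul_cancel₀ _ hq]
  have hs := pow_three_mul_plateRad U hk
  have hr := cpow_one_half_sq (plateRad U k)
  generalize plateRad U k ^ (1 / 2 : ℂ) = r at hr ⊢
  generalize plateRad U k = s at hr hs
  field_simp
  linear_combination k ^ 3 * hr + hs

lemma tendsto_plateOmegaPC_sub :
    Tendsto (fun k => plateOmegaPC U k - (k ^ 2 - k / 2))
      (cobounded ℂ) (𝓝 ((U : ℂ) + 3 / 8)) := by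
  have hr := (tendsto_plateRad U).mul_cpow_half_sub_one (tendsto_mul_plateRad_sub_one U)
  have hq := tendsto_one_add_one_div_cobounded
  have h := (((tendsto_const_nhds (x := (U : ℂ) + 1 / 2)).sub
    ((tendsto_const_nhds (x := (U : ℂ) ^ 2 / 2)).mul tendsto_inv₀_cobounded)).sub
    ((hr.pow 2).div_const 2)).div hq one_ne_zero
  convert h.congr' ?_ using 2
  · norm_num
    ring
  · filter_upwards [eventually_ne_cobounded 0, hq.eventually_ne one_ne_zero] with k hk hqk
    exact (plateOmegaPC_sub_eq U hk hqk).symm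

lemma plateOmegaMC_add_eq (k : ℂ) : plateOmegaMC U k + (k ^ 2 - k / 2) =
    2 * (U : ℂ) / (1 + 1 / k) - (plateOmegaPC U k - (k ^ 2 - k / 2)) := by
  rw [plateOmegaPC, plateOmegaMC]; ring

lemma tendsto_plateOmegaMC_add :
    Tendsto (fun k => plateOmegaMC U k + (k ^ 2 - k / 2))
      (cobounded ℂ) (𝓝 ((U : ℂ) - 3 / 8)) := by
  have h := ((tendsto_const_nhds (x := 2 * (U : ℂ))).div tendsto_one_add_one_div_cobounded
    one_ne_zero).sub (tendsto_plateOmegaPC_sub U)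
  convert h.congr fun k => (plateOmegaMC_add_eq U k).symm using 2
  ring

end

/-- exponential estimates in the domain `D = {k : Re k ≥ 1/4, Im k ≤ 0}`:
for every `ε > 0` there is `R > 0` such that for `|k| ≥ R` in `D` the radicand avoids
`(−∞,0]` and for every `t > 0`,
`|e^{−iω₊(k)t}| ≤ e^{(ε + ½(Im k)(4 Re k − 1))t}` and
`|e^{−iω₋(k)t}| ≤ e^{(ε − ½(Im k)(4 Re k − 1))t}`. -/
theorem exponential_estimates_complex (U : ℝ) :
    ∀ ε : ℝ, 0 < ε → ∃ R : ℝ, 0 < R ∧ ∀ k : ℂ,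
      1 / 4 ≤ k.re → k.im ≤ 0 → R ≤ ‖k‖ →
      (¬ ((plateRad U k).im = 0 ∧ (plateRad U k).re ≤ 0))
      ∧ ∀ t : ℝ, 0 < t →
        ‖Complex.exp (-Complex.I * plateOmegaPC U k * (t : ℂ))‖
          ≤ Real.exp ((ε + 1 / 2 * k.im * (4 * k.re - 1)) * t)
        ∧ ‖Complex.exp (-Complex.I * plateOmegaMC U k * (t : ℂ))‖
          ≤ Real.exp ((ε - 1 / 2 * k.im * (4 * k.re - 1)) * t) := by
  intro ε hε
  have hslit := (tendsto_plateRad U).eventually (isOpen_slitPlane.mem_nhds one_mem_slitPlane)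
  have hP := (tendsto_plateOmegaPC_sub U).eventually_im_le (by simp) hε
  have hM := (tendsto_plateOmegaMC_add U).eventually_im_le (by simp) hε
  obtain ⟨R, hR, hk⟩ := exists_pos_forall_le_norm_of_eventually_cobounded (hslit.and (hP.and hM))
  refine ⟨R, hR, fun k _ _ hRk => ?_⟩
  obtain ⟨hsk, hPk, hMk⟩ := hk k hRk
  refine ⟨by simpa [mem_slitPlane_iff, or_iff_not_imp_right] using hsk, fun t ht => ⟨?_, ?_⟩⟩
  · refine norm_exp_neg_I_mul_mul_ofReal_le ?_ ht.le
    rw [sub_im, im_sq_sub_div_two] at hPk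
    linarith
  · refine norm_exp_neg_I_mul_mul_ofReal_le ?_ ht.le
    rw [add_im, im_sq_sub_div_two] at hMk
    linarith
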